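/- Let 𝓗 be a finite hypergraph on a finite set V. The following three statements are equivalent: (i) 𝓗 is a Tetris hypergraph; (ii) 𝓖_𝓗 = 𝓣_𝓗; (iii) for every position x ∈ ℕ^V and every integer v with 0 ≤ v < 𝓣_𝓗(x) there is a move x → x' in NIM_𝓗 with 𝓣_𝓗(x') = v. -/
import Mathlib


/-- The minimum excludant of a set of natural numbers. -/
noncomputable def mex (S : Set ℕ) : ℕ := sInf {n : ℕ | n ∉ S}

open Classical in
/-- The Sprague–Grundy function of the impartial game with move relation `move`
(meaningful when every play is finite, i.e. the reversed move relation is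
well-founded): it satisfies `sgFun move x = mex {sgFun move y | move x y}`. -/
noncomputable def sgFun {X : Type*} (move : X → X → Prop) : X → ℕ :=
  if hwf : WellFounded (fun y x => move x y) then
    hwf.fix (fun x ih => mex {v : ℕ | ∃ (y : X) (h : move x y), ih y h = v})
  else fun _ => 0

open Classical in
/-- The Tetris function: the length of a longest play starting at `x`
(meaningful when every play is finite and the game is finitely branching):
it satisfies `tetrisFun move x = sup {tetrisFun move y + 1 | move x y}`. -/
noncomputable def tetrisFun {X : Type*} (move : X → X → Prop) : X → ℕ :=
  if hwf : WellFounded (fun y x => move x y) then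
    hwf.fix (fun x ih => sSup {v : ℕ | ∃ (y : X) (h : move x y), v = ih y h + 1})
  else fun _ => 0

/-- A game is SG decreasing if every move strictly decreases the SG value. -/
def SGDecreasing {X : Type*} (move : X → X → Prop) : Prop :=
  ∀ x y, move x y → sgFun move y < sgFun move x

/-- The move relation of the game `NIM_𝓗` on positions `ℕ^V`. -/
def nimMove {V : Type*} (𝓗 : Set (Finset V)) (x x' : V → ℕ) : Prop :=
  ∃ H ∈ 𝓗, (∀ i ∈ H, x' i < x i) ∧ ∀ i ∉ H, x' i = x i

/-- A hypergraph is Tetris if `NIM_𝓗` is SG decreasing. -/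
def IsTetrisHypergraph {V : Type*} (𝓗 : Set (Finset V)) : Prop :=
  SGDecreasing (nimMove 𝓗)

/-- The move relation of the `𝓗`-combination of the games `move i`. -/
def combMove {V : Type*} {X : V → Type*} (𝓗 : Set (Finset V))
    (move : ∀ i, X i → X i → Prop) (x x' : ∀ i, X i) : Prop :=
  ∃ H ∈ 𝓗, (∀ i ∈ H, move i (x i) (x' i)) ∧ ∀ i ∉ H, x' i = x i

/-- Condition (*): every nonempty induced subhypergraph has a hyperedge
intersecting all its hyperedges. -/
def CondStar {V : Type*} [DecidableEq V] (𝓗 : Set (Finset V)) : Prop :=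
  ∀ S : Finset V, (∃ H ∈ 𝓗, H ⊆ S) →
    ∃ H ∈ 𝓗, H ⊆ S ∧ ∀ H' ∈ 𝓗, H' ⊆ S → (H ∩ H').Nonempty

set_option linter.unusedSectionVars false in
lemma mex_notin {S : Set ℕ} (hS : S.Finite) : mex S ∉ S := by
  have h1 : {n : ℕ | n ∉ S}.Nonempty := hS.infinite_compl.nonempty
  exact Nat.sInf_mem h1

lemma mem_of_lt_mex {S : Set ℕ} {k : ℕ} (hk : k < mex S) : k ∈ S := by
  by_contra h
  exact absurd (Nat.sInf_le h) (not_le.mpr hk)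

lemma sg_eq {X : Type*} {move : X → X → Prop}
    (hwf : WellFounded (fun y x => move x y)) (x : X) :
    sgFun move x = mex {v : ℕ | ∃ (y : X) (_ : move x y), sgFun move y = v} := by
  classical
  have h : sgFun move = hwf.fix
      (fun x ih => mex {v : ℕ | ∃ (y : X) (h : move x y), ih y h = v}) := dif_pos hwf
  rw [h, WellFounded.fix_eq]

lemma tetris_eq {X : Type*} {move : X → X → Prop}
    (hwf : WellFounded (fun y x => move x y)) (x : X) :
    tetrisFun move x = sSup {v : ℕ | ∃ (y : X) (_ : move x y), v = tetrisFun move y + 1} := by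
  classical
  have h : tetrisFun move = hwf.fix
      (fun x ih => sSup {v : ℕ | ∃ (y : X) (h : move x y), v = ih y h + 1}) := dif_pos hwf
  rw [h, WellFounded.fix_eq]

section Nim

variable {V : Type*} [Fintype V] {𝓗 : Set (Finset V)}

lemma nim_le {x y : V → ℕ} (h : nimMove 𝓗 x y) (i : V) : y i ≤ x i := by
  obtain ⟨H, _, h1, h2⟩ := h
  by_cases hi : i ∈ H
  · exact (h1 i hi).le
  · exact (h2 i hi).le

lemma nim_sum_lt (hne : ∀ H ∈ 𝓗, H.Nonempty) {x y : V → ℕ} (h : nimMove 𝓗 x y) :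
    ∑ i, y i < ∑ i, x i := by
  obtain ⟨i, hi⟩ := hne h.choose h.choose_spec.1
  exact Finset.sum_lt_sum (fun j _ => nim_le h j)
    ⟨i, Finset.mem_univ i, h.choose_spec.2.1 i hi⟩

lemma nim_wf (hne : ∀ H ∈ 𝓗, H.Nonempty) :
    WellFounded (fun y x => nimMove 𝓗 x y) :=
  Subrelation.wf (fun h => nim_sum_lt hne h)
    (InvImage.wf (fun x : V → ℕ => ∑ i, x i) wellFounded_lt)

lemma nim_moves_finite (x : V → ℕ) : {y | nimMove 𝓗 x y}.Finite := by
  apply Set.Finite.subset (Set.Finite.pi (fun i => Set.finite_Iic (x i)))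
  intro y hy i _
  exact nim_le hy i

lemma sgSet_finite (x : V → ℕ) :
    {v : ℕ | ∃ (y : V → ℕ) (_ : nimMove 𝓗 x y), sgFun (nimMove 𝓗) y = v}.Finite := by
  have : {v : ℕ | ∃ (y : V → ℕ) (_ : nimMove 𝓗 x y), sgFun (nimMove 𝓗) y = v}
      = sgFun (nimMove 𝓗) '' {y | nimMove 𝓗 x y} := by
    ext v; simp [Set.mem_image]
  rw [this]
  exact (nim_moves_finite x).image _

lemma tetrisSet_finite (x : V → ℕ) :
    {v : ℕ | ∃ (y : V → ℕ) (_ : nimMove 𝓗 x y), v = tetrisFun (nimMove 𝓗) y + 1}.Finite := by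
  have : {v : ℕ | ∃ (y : V → ℕ) (_ : nimMove 𝓗 x y), v = tetrisFun (nimMove 𝓗) y + 1}
      = (fun y => tetrisFun (nimMove 𝓗) y + 1) '' {y | nimMove 𝓗 x y} := by
    ext v; simp [Set.mem_image, eq_comm]
  rw [this]
  exact (nim_moves_finite x).image _

lemma tetris_lt (hne : ∀ H ∈ 𝓗, H.Nonempty) {x y : V → ℕ} (h : nimMove 𝓗 x y) :
    tetrisFun (nimMove 𝓗) y < tetrisFun (nimMove 𝓗) x := by
  have := tetris_eq (nim_wf hne) x
  have hmem : tetrisFun (nimMove 𝓗) y + 1 ∈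
      {v : ℕ | ∃ (y : V → ℕ) (_ : nimMove 𝓗 x y), v = tetrisFun (nimMove 𝓗) y + 1} :=
    ⟨y, h, rfl⟩
  have hle := le_csSup (tetrisSet_finite x).bddAbove hmem
  omega

end Nim

theorem stmt5 {V : Type*} [Fintype V]
    (𝓗 : Set (Finset V)) (hne : ∀ H ∈ 𝓗, H.Nonempty) :
    List.TFAE [
      IsTetrisHypergraph 𝓗,
      sgFun (nimMove 𝓗) = tetrisFun (nimMove 𝓗),
      ∀ (x : V → ℕ) (v : ℕ), v < tetrisFun (nimMove 𝓗) x →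
        ∃ x', nimMove 𝓗 x x' ∧ tetrisFun (nimMove 𝓗) x' = v ] := by
  have hwf := nim_wf hne
  tfae_have 1 → 2 := by
    intro hdec
    funext x
    induction x using hwf.induction with
    | _ x ih =>
    have hset : {v : ℕ | ∃ (y : V → ℕ) (_ : nimMove 𝓗 x y), sgFun (nimMove 𝓗) y = v}
        = Set.Iio (sgFun (nimMove 𝓗) x) := by
      ext v
      constructor
      · rintro ⟨y, hy, rfl⟩
        exact hdec x y hy
      · intro hv
        rw [sg_eq hwf x] at hv
        exact mem_of_lt_mex hv
    apply le_antisymm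
    · -- sgFun (nimMove 𝓗) x ≤ tetrisFun (nimMove 𝓗) x
      by_cases h0 : sgFun (nimMove 𝓗) x = 0
      · omega
      · have : sgFun (nimMove 𝓗) x - 1 ∈ Set.Iio (sgFun (nimMove 𝓗) x) := Set.mem_Iio.mpr (by omega)
        rw [← hset] at this
        obtain ⟨y, hy, hyv⟩ := this
        have hty : tetrisFun (nimMove 𝓗) y = sgFun (nimMove 𝓗) x - 1 := by rw [← ih y hy, hyv]
        have hmem : tetrisFun (nimMove 𝓗) y + 1 ∈
            {v : ℕ | ∃ (y : V → ℕ) (_ : nimMove 𝓗 x y), v = tetrisFun (nimMove 𝓗) y + 1} := ⟨y, hy, rfl⟩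
        have := le_csSup (tetrisSet_finite x).bddAbove hmem
        rw [← tetris_eq hwf x] at this
        omega
    · -- tetrisFun (nimMove 𝓗) x ≤ sgFun (nimMove 𝓗) x
      rw [tetris_eq hwf x]
      apply csSup_le'
      rintro v ⟨y, hy, rfl⟩
      have : sgFun (nimMove 𝓗) y ∈ Set.Iio (sgFun (nimMove 𝓗) x) := by rw [← hset]; exact ⟨y, hy, rfl⟩
      have := ih y hy ▸ this
      simp only [Set.mem_Iio] at this
      omega
  tfae_have 2 → 3 := by
    intro heq x v hv
    rw [← heq, sg_eq hwf x] at hv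
    obtain ⟨y, hy, hyv⟩ := mem_of_lt_mex hv
    exact ⟨y, hy, by rw [← heq]; exact hyv⟩
  tfae_have 3 → 1 := by
    intro h3
    have key : ∀ x : V → ℕ, sgFun (nimMove 𝓗) x = tetrisFun (nimMove 𝓗) x := by
      intro x
      induction x using hwf.induction with
      | _ x ih =>
      have hset : {v : ℕ | ∃ (y : V → ℕ) (_ : nimMove 𝓗 x y), sgFun (nimMove 𝓗) y = v}
          = Set.Iio (tetrisFun (nimMove 𝓗) x) := by
        ext v
        constructor
        · rintro ⟨y, hy, rfl⟩
          rw [ih y hy]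
          exact tetris_lt hne hy
        · intro hv
          obtain ⟨y, hy, hyv⟩ := h3 x v hv
          exact ⟨y, hy, by rw [ih y hy, hyv]⟩
      rw [sg_eq hwf x, mex, hset]
      have : {n : ℕ | n ∉ Set.Iio (tetrisFun (nimMove 𝓗) x)} = Set.Ici (tetrisFun (nimMove 𝓗) x) := by
        ext n; simp
      rw [this, csInf_Ici]
    intro x y hxy
    rw [key x, key y]
    exact tetris_lt hne hxy
  tfae_finish
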